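/- Let 𝒜 and ℬ be regular families of finite subsets of ℕ, and suppose E is a proper initial segment of F ∈ 𝒜[ℬ]. Then either E ∈ 𝒜'[ℬ] (where 𝒜' is the Cantor–Bendixson derivative of 𝒜) or F \ E ∈ ℬ. -/

import Mathlib

/-- Identify a finite subset of `ℕ` with a point of the Cantor space `ℕ → Bool`. -/
def toCantor (F : Finset ℕ) : ℕ → Bool := fun n => decide (n ∈ F)

/-- Hereditary: closed under subsets. -/
def Hereditary (G : Set (Finset ℕ)) : Prop := ∀ ⦃E F : Finset ℕ⦄, E ⊆ F → F ∈ G → E ∈ G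

/-- Spreading: closed under replacing elements by larger ones, keeping the
increasing order and the cardinality. -/
def Spreading (G : Set (Finset ℕ)) : Prop :=
  ∀ (E : Finset ℕ) (f : ℕ → ℕ), StrictMonoOn f ↑E → (∀ n ∈ E, n ≤ f n) →
    E ∈ G → E.image f ∈ G

/-- Regular: compact (in the Cantor topology), hereditary and spreading. -/
def IsRegularFam (G : Set (Finset ℕ)) : Prop :=
  IsCompact (toCantor '' G) ∧ Hereditary G ∧ Spreading G

/-- The Cantor–Bendixson derivative. -/
def cbDeriv {α : Type*} [TopologicalSpace α] (K : Set α) : Set α :=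
  {x | x ∈ K ∧ x ∈ closure (K \ {x})}

/-- Transfinite Cantor–Bendixson iterates. -/
noncomputable def cbIter {α : Type*} [TopologicalSpace α] (K : Set α) (ξ : Ordinal) : Set α :=
  Ordinal.limitRecOn ξ K (fun _ S => cbDeriv S)
    (fun o _ ih => ⋂ (ζ : Ordinal) (h : ζ < o), ih ζ h)

/-- The family `ℱ[𝒢]`, consisting of `∅` together with all unions
`E₁ ∪ ⋯ ∪ Eₙ` where `∅ ≠ Eᵢ ∈ 𝒢`, `E₁ < ⋯ < Eₙ` and `(min E₁, …, min Eₙ) ∈ ℱ`. -/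
def famComb (F G : Set (Finset ℕ)) : Set (Finset ℕ) :=
  {∅} ∪ {E | ∃ (n : ℕ) (Es : Fin n → Finset ℕ) (mins : Fin n → ℕ),
    (∀ i, Es i ∈ G ∧ (Es i).Nonempty) ∧
    (∀ i j : Fin n, i < j → ∀ a ∈ Es i, ∀ b ∈ Es j, a < b) ∧
    (∀ i, IsLeast (↑(Es i) : Set ℕ) (mins i)) ∧
    Finset.univ.image mins ∈ F ∧
    E = Finset.univ.biUnion Es}

/-- `E` is a proper initial segment of `F`: `E` consists of the first `|E|` elements
of `F` and `E ≠ F`. -/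
def IsProperInitialSegment (E F : Finset ℕ) : Prop :=
  E ⊆ F ∧ E ≠ F ∧ ∀ a ∈ E, ∀ b ∈ F, b ∉ E → a < b

/-- The Cantor–Bendixson derivative `𝒜'` of a family of finite sets, viewed again as a
family of finite sets. -/
def famDeriv (A : Set (Finset ℕ)) : Set (Finset ℕ) :=
  {E : Finset ℕ | toCantor E ∈ cbDeriv (toCantor '' A)}

/-!
Write `F = F₁ ∪ ⋯ ∪ Fₙ` with blocks in `ℬ` and minima `M = {m₁ < ⋯ < mₙ} ∈ 𝒜`. The sets `E ∩ Fᵢ`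
that are nonempty contain `mᵢ`, because `E` is an initial segment, so they decompose `E` with
minima `E ∩ M`. If `F \ E` lies in the last block, it belongs to `ℬ` by heredity. Otherwise `E`
lies below `mₙ`, and `E ∩ M` is a non-isolated point of `𝒜`: by spreading, `(E ∩ M) ∪ {t} ∈ 𝒜`
for every `t ≥ mₙ`, and these sets converge to `E ∩ M` in the Cantor space.
-/

open Filter Topology Finset

lemma toCantor_injective : Function.Injective toCantor := by
  intro s t h
  ext n
  simpa [toCantor] using congrFun h n

lemma tendsto_toCantor_insert (M : Finset ℕ) :
    Tendsto (fun t => toCantor (insert t M)) atTop (𝓝 (toCantor M)) := by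
  rw [tendsto_pi_nhds]
  intro j
  refine tendsto_const_nhds.congr' ?_
  filter_upwards [eventually_gt_atTop j] with t ht
  simp [toCantor, ht.ne]

lemma Spreading.insert_mem {A : Set (Finset ℕ)} (hA : Spreading A) {M : Finset ℕ} {m t : ℕ}
    (hM : ∀ a ∈ M, a < m) (hmt : m ≤ t) (h : insert m M ∈ A) : insert t M ∈ A := by
  let f : ℕ → ℕ := fun x => if x < m then x else x - m + t
  have hf : StrictMono f := by
    intro x y hxy
    simp only [f]
    split_ifs <;> omega
  have himage : (insert m M).image f = insert t M := by
    have hfM : M.image f = M := (image_congr fun x hx => if_pos (hM x hx)).trans image_id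
    rw [image_insert, hfM]
    simp [f]
  rw [← himage]
  exact hA _ f (hf.strictMonoOn _) (fun x _ => by simp only [f]; split_ifs <;> omega) h

lemma mem_famDeriv_of_insert_mem {A : Set (Finset ℕ)} (hher : Hereditary A) (hspr : Spreading A)
    {M : Finset ℕ} {m : ℕ} (hM : ∀ a ∈ M, a < m) (h : insert m M ∈ A) : M ∈ famDeriv A := by
  refine ⟨⟨M, hher (subset_insert m M) h, rfl⟩,
    mem_closure_of_tendsto (tendsto_toCantor_insert M) ?_⟩
  filter_upwards [eventually_ge_atTop m] with t ht
  refine ⟨⟨_, hspr.insert_mem hM ht h, rfl⟩, fun heq => ?_⟩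
  have htM : t ∈ M := toCantor_injective heq ▸ mem_insert_self t M
  exact absurd (hM t htM) (not_lt.2 ht)

lemma mem_famComb_of_subset_biUnion {C B : Set (Finset ℕ)} (hB : Hereditary B) {n : ℕ}
    {Es : Fin n → Finset ℕ} {mins : Fin n → ℕ} (hEs : ∀ i, Es i ∈ B ∧ (Es i).Nonempty)
    (hlt : ∀ i j : Fin n, i < j → ∀ a ∈ Es i, ∀ b ∈ Es j, a < b)
    (hmins : ∀ i, IsLeast (↑(Es i) : Set ℕ) (mins i)) {E : Finset ℕ}
    (hEF : E ⊆ univ.biUnion Es) (hEmins : ∀ i, (E ∩ Es i).Nonempty → mins i ∈ E)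
    (hC : E ∩ univ.image mins ∈ C) : E ∈ famComb C B := by
  set s := univ.filter fun i => mins i ∈ E
  let e := s.orderEmbOfFin rfl
  have he : ∀ j, mins (e j) ∈ E := fun j => (mem_filter.1 (s.orderEmbOfFin_mem rfl j)).2
  have hrange : ∀ i, mins i ∈ E → ∃ j, e j = i := fun i hi => by
    have hi' : i ∈ Set.range e := by simp [e, s.range_orderEmbOfFin rfl, s, hi]
    exact hi'
  have hmin_mem : ∀ j, mins (e j) ∈ E ∩ Es (e j) := fun j => mem_inter.2 ⟨he j, (hmins _).1⟩
  refine Or.inr ⟨s.card, fun j => E ∩ Es (e j), fun j => mins (e j), fun j => ?_,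
    fun j j' hjj' a ha b hb => ?_, fun j => ⟨hmin_mem j, fun x hx => ?_⟩, ?_, ?_⟩
  · exact ⟨hB inter_subset_right (hEs _).1, ⟨_, hmin_mem j⟩⟩
  · exact hlt _ _ (e.strictMono hjj') a (mem_inter.1 ha).2 b (mem_inter.1 hb).2
  · exact (hmins _).2 (mem_inter.1 hx).2
  · convert hC using 1
    ext x
    simp only [mem_image, mem_univ, true_and, mem_inter]
    constructor
    · rintro ⟨j, rfl⟩
      exact ⟨he j, _, rfl⟩
    · rintro ⟨hx, i, rfl⟩
      obtain ⟨j, rfl⟩ := hrange i hx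
      exact ⟨j, rfl⟩
  · ext x
    simp only [mem_biUnion, mem_univ, true_and, mem_inter]
    refine ⟨fun hx => ?_, fun ⟨_, hx, _⟩ => hx⟩
    obtain ⟨i, hxi⟩ := mem_biUnion.1 (hEF hx)
    obtain ⟨j, rfl⟩ := hrange i (hEmins i ⟨x, mem_inter.2 ⟨hx, hxi.2⟩⟩)
    exact ⟨j, hx, hxi.2⟩

/-- If `𝒜, ℬ` are regular and `E` is a proper initial segment of `F ∈ 𝒜[ℬ]`, then
either `E ∈ 𝒜'[ℬ]` or `F \ E ∈ ℬ`. -/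
theorem initialSegment_famComb (A B : Set (Finset ℕ))
    (hA : IsRegularFam A) (hB : IsRegularFam B) (E F : Finset ℕ)
    (hEF : IsProperInitialSegment E F) (hF : F ∈ famComb A B) :
    E ∈ famComb (famDeriv A) B ∨ F \ E ∈ B := by
  obtain ⟨hEF, hne, hinit⟩ := hEF
  obtain ⟨y, hyF, hyE⟩ := exists_of_ssubset (hEF.ssubset_of_ne hne)
  rcases hF with hF | ⟨n, Es, mins, hEs, hlt, hmins, hM, rfl⟩
  · exact absurd (Set.mem_singleton_iff.1 hF ▸ hyF) (notMem_empty y)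
  obtain ⟨i, -, hyi⟩ := mem_biUnion.1 hyF
  obtain ⟨k, rfl⟩ := Nat.exists_eq_add_one_of_ne_zero i.pos.ne'
  by_cases hlast : univ.biUnion Es \ E ⊆ Es (Fin.last k)
  · exact Or.inr (hB.2.1 hlast (hEs _).1)
  left
  obtain ⟨z, hz, hzl⟩ := not_subset.1 hlast
  obtain ⟨hzF, hzE⟩ := mem_sdiff.1 hz
  obtain ⟨j, -, hzj⟩ := mem_biUnion.1 hzF
  have hj : j < Fin.last k := (Fin.le_last j).lt_of_ne (by rintro rfl; exact hzl hzj)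
  have hE_lt : ∀ x ∈ E, x < mins (Fin.last k) := fun x hx =>
    (hinit x hx z hzF hzE).trans (hlt j _ hj z hzj _ (hmins _).1)
  have hEmins : ∀ i, (E ∩ Es i).Nonempty → mins i ∈ E := by
    rintro i ⟨x, hx⟩
    by_contra hi
    exact (hinit x (mem_inter.1 hx).1 (mins i) (mem_biUnion.2 ⟨i, mem_univ _, (hmins i).1⟩)
      hi).not_ge ((hmins i).2 (mem_inter.1 hx).2)
  refine mem_famComb_of_subset_biUnion hB.2.1 hEs hlt hmins hEF hEmins ?_
  exact mem_famDeriv_of_insert_mem hA.2.1 hA.2.2 (fun a ha => hE_lt a (mem_inter.1 ha).1)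
    (hA.2.1 (insert_subset (mem_image_of_mem _ (mem_univ _)) inter_subset_right) hM)
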